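/- If f : O → S is any function between alphabets, then for all sequences p and q over O, ed(map f p, map f q) ≤ ed(p, q). That is, the edit distance is contractive under elementwise (non-reduced many-to-one) summarization. -/

import Mathlib

open List

structure Levenshtein.Cost (α β δ : Type*) where
  delete : α → δ
  insert : β → δ
  substitute : α → β → δ

def Levenshtein.defaultCost {α : Type*} [DecidableEq α] : Levenshtein.Cost α α ℕ where
  delete _ := 1
  insert _ := 1
  substitute a b := if a = b then 0 else 1

def levenshtein {α β δ : Type*} [AddZeroClass δ] [Min δ] (C : Levenshtein.Cost α β δ) :
    List α → List β → δ
  | [], [] => 0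
  | [], y :: ys => C.insert y + levenshtein C [] ys
  | x :: xs, [] => C.delete x + levenshtein C xs []
  | x :: xs, y :: ys => min (C.delete x + levenshtein C xs (y :: ys))
      (min (C.insert y + levenshtein C (x :: xs) ys) (C.substitute x y + levenshtein C xs ys))

def ed {α : Type*} [DecidableEq α] (p q : List α) : ℕ :=
  levenshtein Levenshtein.defaultCost p q

section Map

variable {α β α' β' δ : Type*} [AddCommMonoid δ] [LinearOrder δ] [IsOrderedAddMonoid δ]
  (C : Levenshtein.Cost α β δ) (C' : Levenshtein.Cost α' β' δ) (f : α → α') (g : β → β')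
  (h_delete : ∀ a, C'.delete (f a) ≤ C.delete a) (h_insert : ∀ b, C'.insert (g b) ≤ C.insert b)
  (h_substitute : ∀ a b, C'.substitute (f a) (g b) ≤ C.substitute a b)
include h_delete h_insert h_substitute

theorem levenshtein_map_le :
    ∀ (p : List α) (q : List β), levenshtein C' (p.map f) (q.map g) ≤ levenshtein C p q
  | [], [] => by simp only [map_nil, levenshtein, le_refl]
  | [], y :: ys => by
    simp only [map_nil, map_cons, levenshtein]
    exact add_le_add (h_insert y) (levenshtein_map_le [] ys)
  | x :: xs, [] => by
    simp only [map_nil, map_cons, levenshtein]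
    exact add_le_add (h_delete x) (levenshtein_map_le xs [])
  | x :: xs, y :: ys => by
    have h₁ := levenshtein_map_le xs (y :: ys)
    have h₂ := levenshtein_map_le (x :: xs) ys
    have h₃ := levenshtein_map_le xs ys
    simp only [map_cons] at h₁ h₂ h₃ ⊢
    rw [levenshtein, levenshtein]
    exact min_le_min (add_le_add (h_delete x) h₁)
      (min_le_min (add_le_add (h_insert y) h₂) (add_le_add (h_substitute x y) h₃))

end Map

theorem Levenshtein.defaultCost_substitute_map_le {α α' : Type*} [DecidableEq α]
    [DecidableEq α'] (f : α → α') (a b : α) :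
    (Levenshtein.defaultCost : Levenshtein.Cost α' α' ℕ).substitute (f a) (f b) ≤
      (Levenshtein.defaultCost : Levenshtein.Cost α α ℕ).substitute a b := by
  simp only [Levenshtein.defaultCost]
  split_ifs <;> simp_all

theorem stmt2 {O S : Type*} [DecidableEq O] [DecidableEq S] (f : O → S) (p q : List O) :
    ed (p.map f) (q.map f) ≤ ed p q :=
  levenshtein_map_le _ _ f f (fun _ => le_rfl) (fun _ => le_rfl)
    (Levenshtein.defaultCost_substitute_map_le f) p q
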